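/- Let B(X,Y) be a complete bipartite labelled acyclic directed graph in which all arcs have the same label, the arc set [X,Y] is nonempty, and all arcs are directed from X to Y (no backward arcs). Then B(X,Y) is isomorphic (as a labelled directed graph) to the vertex-removing synchronised product (B(X,Y)/Y) \boxbackslash (B(X,Y)/X). -/

import Mathlib

/-- A labelled directed multigraph: vertex type `V`, arc type `A`, label type `L`,
incidence function `mu` giving (tail, head), and arc labelling `lab`. -/
structure LDMG (V A L : Type) where
  mu : A → V × V
  lab : A → L

namespace LDMG

variable {V A L V' A' : Type}

/-- The one-step arc relation. -/
def step (G : LDMG V A L) (u v : V) : Prop := ∃ a, G.mu a = (u, v)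

/-- `G` is acyclic: no directed cycle. -/
def Acyclic (G : LDMG V A L) : Prop := ∀ v, ¬ Relation.TransGen G.step v v

/-- `v` has in-degree 0 in `G`. -/
def InDegZero (G : LDMG V A L) (v : V) : Prop := ∀ a, (G.mu a).2 ≠ v

/-- `v` has out-degree 0 in `G`. -/
def OutDegZero (G : LDMG V A L) (v : V) : Prop := ∀ a, (G.mu a).1 ≠ v

/-- `peel G n`: the set of vertices deleted after `n` rounds of repeatedly removing the
vertices of in-degree 0 (together with the arcs with tails there). -/
def peel (G : LDMG V A L) : ℕ → Set V
  | 0 => ∅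
  | n + 1 => peel G n ∪ {v | ∀ a, (G.mu a).2 = v → (G.mu a).1 ∈ peel G n}

/-- The level set `S^n(G)`. -/
def levelSet (G : LDMG V A L) (n : ℕ) : Set V := peel G (n + 1) \ peel G n

/-- Vertex type of the contraction `G/X`: the vertices outside `X` together with one new
vertex (`Sum.inr ()`) replacing `X`. -/
def CVertex (X : Set V) : Type := {v : V // v ∉ X} ⊕ Unit

/-- Canonical projection of vertices to contraction vertices. -/
noncomputable def cMap (X : Set V) (v : V) : CVertex X :=
  haveI := Classical.propDecidable (v ∈ X)
  if h : v ∈ X then Sum.inr () else Sum.inl ⟨v, h⟩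

/-- The arcs of `G` surviving the contraction of `X` (i.e. not having both ends in `X`),
before identification of parallel equally-labelled arcs. -/
def CPre (G : LDMG V A L) (X : Set V) : Type :=
  {a : A // ¬ ((G.mu a).1 ∈ X ∧ (G.mu a).2 ∈ X)}

noncomputable def cKey (G : LDMG V A L) (X : Set V) (a : CPre G X) :
    (CVertex X × CVertex X) × L :=
  ((cMap X (G.mu a.1).1, cMap X (G.mu a.1).2), G.lab a.1)

/-- Arc type of `G/X`: surviving arcs, with arcs having identical tail, head and label
identified. -/
def CArc (G : LDMG V A L) (X : Set V) : Type :=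
  Quotient (Setoid.ker (cKey G X))

/-- The contraction `G/X`. -/
noncomputable def contract (G : LDMG V A L) (X : Set V) : LDMG (CVertex X) (CArc G X) L where
  mu := Quotient.lift (fun a => (cKey G X a).1) (fun _ _ h => congrArg Prod.fst h)
  lab := Quotient.lift (fun a => (cKey G X a).2) (fun _ _ h => congrArg Prod.snd h)

/-- The Cartesian product `G □ H`. -/
def box (G : LDMG V A L) (H : LDMG V' A' L) : LDMG (V × V') (A × V' ⊕ V × A') L where
  mu := fun x =>
    match x with
    | Sum.inl (a, w) => (((G.mu a).1, w), ((G.mu a).2, w))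
    | Sum.inr (u, b) => ((u, (H.mu b).1), (u, (H.mu b).2))
  lab := fun x =>
    match x with
    | Sum.inl (a, _) => G.lab a
    | Sum.inr (_, b) => H.lab b

/-- The label `ℓ` occurs in `G`. -/
def HasLab (G : LDMG V A L) (ℓ : L) : Prop := ∃ a, G.lab a = ℓ

/-- Arc type of the intermediate product `G ⊠ H`: asynchronous copies of arcs of `G`
(whose label does not occur in `H`), asynchronous copies of arcs of `H` (whose label
does not occur in `G`), and synchronous arcs for pairs of equally labelled arcs. -/
def InterArc (G : LDMG V A L) (H : LDMG V' A' L) : Type :=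
  {p : A × V' // ¬ H.HasLab (G.lab p.1)} ⊕
  {p : V × A' // ¬ G.HasLab (H.lab p.2)} ⊕
  {p : A × A' // G.lab p.1 = H.lab p.2}

/-- The intermediate product `G ⊠ H`. -/
def inter (G : LDMG V A L) (H : LDMG V' A' L) : LDMG (V × V') (InterArc G H) L where
  mu := fun x =>
    match x with
    | Sum.inl ⟨(a, w), _⟩ => (((G.mu a).1, w), ((G.mu a).2, w))
    | Sum.inr (Sum.inl ⟨(u, b), _⟩) => ((u, (H.mu b).1), (u, (H.mu b).2))
    | Sum.inr (Sum.inr ⟨(a, b), _⟩) => (((G.mu a).1, (H.mu b).1), ((G.mu a).2, (H.mu b).2))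
  lab := fun x =>
    match x with
    | Sum.inl ⟨(a, _), _⟩ => G.lab a
    | Sum.inr (Sum.inl ⟨(_, b), _⟩) => H.lab b
    | Sum.inr (Sum.inr ⟨(a, _), _⟩) => G.lab a

/-- `v` has positive level in `G □ H`, i.e. some in-arc in the Cartesian product. -/
def PosLevelBox (G : LDMG V A L) (H : LDMG V' A' L) (v : V × V') : Prop :=
  ∃ x, ((G.box H).mu x).2 = v

/-- The set of vertices removed after `n` rounds of the VRSP removal process: repeatedly
remove the vertices having in-degree 0 in the current graph but positive level in `G □ H`
(together with their out-arcs). -/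
def vrspRem (G : LDMG V A L) (H : LDMG V' A' L) : ℕ → Set (V × V')
  | 0 => ∅
  | n + 1 => vrspRem G H n ∪
      {v | PosLevelBox G H v ∧
        ∀ x, ((G.inter H).mu x).2 = v → ((G.inter H).mu x).1 ∈ vrspRem G H n}

/-- All vertices eventually removed in the VRSP removal process. -/
def vrspRemoved (G : LDMG V A L) (H : LDMG V' A' L) : Set (V × V') := ⋃ n, vrspRem G H n

/-- Vertex type of the vertex-removing synchronised product `G ⊟ H`. -/
def VrspV (G : LDMG V A L) (H : LDMG V' A' L) : Type := {v : V × V' // v ∉ vrspRemoved G H}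

/-- Arc type of `G ⊟ H`: arcs of `G ⊠ H` with both ends surviving. -/
def VrspArc (G : LDMG V A L) (H : LDMG V' A' L) : Type :=
  {x : InterArc G H // ((G.inter H).mu x).1 ∉ vrspRemoved G H ∧
    ((G.inter H).mu x).2 ∉ vrspRemoved G H}

/-- The vertex-removing synchronised product `G ⊟ H`. -/
def vrsp (G : LDMG V A L) (H : LDMG V' A' L) : LDMG (VrspV G H) (VrspArc G H) L where
  mu := fun x => (⟨((G.inter H).mu x.1).1, x.2.1⟩, ⟨((G.inter H).mu x.1).2, x.2.2⟩)
  lab := fun x => (G.inter H).lab x.1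

/-- Isomorphism of labelled directed multigraphs: a vertex bijection preserving the
existence of arcs together with their labels. -/
def Iso (G : LDMG V A L) {V' A' : Type} (H : LDMG V' A' L) : Prop :=
  ∃ φ : V ≃ V', ∀ u v ℓ,
    (∃ a, G.mu a = (u, v) ∧ G.lab a = ℓ) ↔ (∃ b, H.mu b = (φ u, φ v) ∧ H.lab b = ℓ)

end LDMG

/-! Every arc carries the label `ℓ`, which occurs in both contractions, so `B/Y ⊠ B/X` has only
synchronous arcs. In `B/Y` every arc runs from some `x ∈ X` to the contracted vertex `Y`; in `B/X`
from the contracted vertex `X` to some `y ∈ Y`. Hence `(x, X)` has no in-arc even in `B/Y □ B/X`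
and is never removed, and `(Y, y)` receives a synchronous arc from such a vertex and survives too,
whereas `(x, y)` and `(Y, X)` have positive level but no synchronous in-arc and are removed in the
first round. The survivors are therefore the pairs `(cMap Y v, cMap X v)`, and a synchronous arc
joins two of them exactly when `u ∈ X` and `v ∈ Y`, i.e. when `u → v` in `B(X,Y)`. -/

namespace LDMG

variable {V A L V' A' : Type}

theorem exists_arc_lab_iff_of_lab_eq {G : LDMG V A L} {ℓ : L} (hG : ∀ a, G.lab a = ℓ)
    {u v : V} {ℓ' : L} : (∃ a, G.mu a = (u, v) ∧ G.lab a = ℓ') ↔ G.step u v ∧ ℓ = ℓ' :=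
  ⟨fun ⟨a, ha, hl⟩ => ⟨⟨a, ha⟩, hG a ▸ hl⟩, fun ⟨⟨a, ha⟩, hl⟩ => ⟨a, ha, hG a ▸ hl⟩⟩

theorem iso_of_step_iff {G : LDMG V A L} {H : LDMG V' A' L} {ℓ : L}
    (hG : ∀ a, G.lab a = ℓ) (hH : ∀ b, H.lab b = ℓ) (φ : V ≃ V')
    (h : ∀ u v, G.step u v ↔ H.step (φ u) (φ v)) : G.Iso H :=
  ⟨φ, fun u v _ => by
    rw [exists_arc_lab_iff_of_lab_eq hG, exists_arc_lab_iff_of_lab_eq hH, h]⟩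

section Contraction

variable {S : Set V}

theorem cMap_of_mem {v : V} (h : v ∈ S) : cMap S v = Sum.inr () := dif_pos h

theorem cMap_of_notMem {v : V} (h : v ∉ S) : cMap S v = Sum.inl ⟨v, h⟩ := dif_neg h

theorem cMap_eq_inr_iff {v : V} : cMap S v = Sum.inr () ↔ v ∈ S := by
  by_cases h : v ∈ S
  · exact iff_of_true (cMap_of_mem h) h
  · exact iff_of_false (by simp [cMap_of_notMem h]) h

theorem eq_of_cMap_eq {u v : V} (hv : v ∉ S) (h : cMap S u = cMap S v) : u = v := by
  have hu : u ∉ S := fun hu => hv (cMap_eq_inr_iff.mp (h ▸ cMap_of_mem hu))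
  rw [cMap_of_notMem hu, cMap_of_notMem hv] at h
  exact congrArg Subtype.val (Sum.inl_injective h)

theorem contract_step_iff (G : LDMG V A L) {p q : CVertex S} :
    (G.contract S).step p q ↔ ∃ a, ¬((G.mu a).1 ∈ S ∧ (G.mu a).2 ∈ S) ∧
      cMap S (G.mu a).1 = p ∧ cMap S (G.mu a).2 = q := by
  constructor
  · rintro ⟨e, he⟩
    induction e using Quotient.ind with
    | _ a => exact ⟨a.1, a.2, congrArg Prod.fst he, congrArg Prod.snd he⟩
  · rintro ⟨a, ha, rfl, rfl⟩
    exact ⟨Quotient.mk _ ⟨a, ha⟩, rfl⟩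

theorem contract_lab_eq {G : LDMG V A L} {ℓ : L} (hG : ∀ a, G.lab a = ℓ) (e : CArc G S) :
    (G.contract S).lab e = ℓ := by
  induction e using Quotient.ind with
  | _ a => exact hG a.1

theorem cMap_prod_injective {S T : Set V} (h : Disjoint S T) :
    Function.Injective fun v => (cMap S v, cMap T v) := by
  intro u v huv
  by_cases hv : v ∈ S
  · exact eq_of_cMap_eq (Set.disjoint_left.mp h hv) (congrArg Prod.snd huv)
  · exact eq_of_cMap_eq hv (congrArg Prod.fst huv)

end Contraction

section Products

variable {G : LDMG V A L} {H : LDMG V' A' L}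

theorem box_step_iff {u v : V × V'} :
    (G.box H).step u v ↔ G.step u.1 v.1 ∧ u.2 = v.2 ∨ u.1 = v.1 ∧ H.step u.2 v.2 := by
  obtain ⟨u₁, u₂⟩ := u
  obtain ⟨v₁, v₂⟩ := v
  constructor
  · rintro ⟨⟨a, w⟩ | ⟨w, b⟩, h⟩ <;> simp only [box, Prod.mk.injEq] at h
    · exact Or.inl ⟨⟨a, Prod.ext h.1.1 h.2.1⟩, h.1.2.symm.trans h.2.2⟩
    · exact Or.inr ⟨h.1.1.symm.trans h.2.1, ⟨b, Prod.ext h.1.2 h.2.2⟩⟩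
  · rintro (⟨⟨a, ha⟩, rfl⟩ | ⟨rfl, ⟨b, hb⟩⟩)
    · exact ⟨Sum.inl (a, u₂), by simp [box, ha]⟩
    · exact ⟨Sum.inr (u₁, b), by simp [box, hb]⟩

theorem posLevelBox_iff {v : V × V'} : PosLevelBox G H v ↔ ∃ u, (G.box H).step u v :=
  ⟨fun ⟨x, hx⟩ => ⟨_, x, Prod.ext rfl hx⟩, fun ⟨_, x, hx⟩ => ⟨x, congrArg Prod.snd hx⟩⟩

variable {ℓ : L} (hG : ∀ a, G.lab a = ℓ) (hH : ∀ b, H.lab b = ℓ)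
include hG hH

theorem inter_lab_eq (x : InterArc G H) : (G.inter H).lab x = ℓ := by
  rcases x with ⟨⟨a, _⟩, _⟩ | ⟨⟨_, b⟩, _⟩ | ⟨⟨a, _⟩, _⟩
  exacts [hG a, hH b, hG a]

theorem inter_step_iff_of_lab_eq [Nonempty A] [Nonempty A'] {u v : V × V'} :
    (G.inter H).step u v ↔ G.step u.1 v.1 ∧ H.step u.2 v.2 := by
  obtain ⟨u₁, u₂⟩ := u
  obtain ⟨v₁, v₂⟩ := v
  constructor
  · rintro ⟨⟨⟨a, _⟩, hna⟩ | ⟨⟨_, b⟩, hnb⟩ | ⟨⟨a, b⟩, _⟩, h⟩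
    · exact absurd ⟨Classical.arbitrary A', (hH _).trans (hG a).symm⟩ hna
    · exact absurd ⟨Classical.arbitrary A, (hG _).trans (hH b).symm⟩ hnb
    · simp only [inter, Prod.mk.injEq] at h
      exact ⟨⟨a, Prod.ext h.1.1 h.2.1⟩, ⟨b, Prod.ext h.1.2 h.2.2⟩⟩
  · rintro ⟨⟨a, ha⟩, ⟨b, hb⟩⟩
    exact ⟨Sum.inr (Sum.inr ⟨(a, b), (hG a).trans (hH b).symm⟩), by simp [inter, ha, hb]⟩

end Products

section Removal

variable {G : LDMG V A L} {H : LDMG V' A' L}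

theorem inDegZero_iff {v : V} : G.InDegZero v ↔ ∀ u, ¬G.step u v :=
  ⟨fun h _ ⟨a, ha⟩ => h a (congrArg Prod.snd ha),
    fun h a ha => h (G.mu a).1 ⟨a, Prod.ext rfl ha⟩⟩

theorem notMem_vrspRemoved_of_not_posLevelBox {v : V × V'} (h : ¬PosLevelBox G H v) :
    v ∉ vrspRemoved G H := by
  simp only [vrspRemoved, Set.mem_iUnion, not_exists]
  intro n
  induction n with
  | zero => exact id
  | succ n ih =>
    rintro (hn | ⟨hpos, -⟩)
    exacts [ih hn, h hpos]

theorem notMem_vrspRemoved_of_step {u v : V × V'} (huv : (G.inter H).step u v)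
    (hu : u ∉ vrspRemoved G H) : v ∉ vrspRemoved G H := by
  obtain ⟨x, hx⟩ := huv
  simp only [vrspRemoved, Set.mem_iUnion, not_exists] at hu ⊢
  intro n
  induction n with
  | zero => exact id
  | succ n ih =>
    rintro (hn | ⟨-, hall⟩)
    exacts [ih hn, hu n (by simpa [hx] using hall x (by rw [hx]))]

theorem mem_vrspRemoved_of_inDegZero {v : V × V'} (hpos : PosLevelBox G H v)
    (h0 : (G.inter H).InDegZero v) : v ∈ vrspRemoved G H :=
  Set.mem_iUnion.mpr ⟨1, Or.inr ⟨hpos, fun x hx => absurd hx (h0 x)⟩⟩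

theorem vrsp_step_iff {p q : VrspV G H} : (G.vrsp H).step p q ↔ (G.inter H).step p.1 q.1 := by
  constructor
  · rintro ⟨b, hb⟩
    exact ⟨b.1, Prod.ext (congrArg (·.1.1) hb) (congrArg (·.2.1) hb)⟩
  · rintro ⟨x, hx⟩
    exact ⟨⟨x, by rw [hx]; exact p.2, by rw [hx]; exact q.2⟩,
      Prod.ext (Subtype.ext (congrArg Prod.fst hx)) (Subtype.ext (congrArg Prod.snd hx))⟩

end Removal

section CompleteBipartite

variable {G : LDMG V A L} {X Y : Set V} (hdisj : Disjoint X Y)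
  (harc : ∀ a, (G.mu a).1 ∈ X ∧ (G.mu a).2 ∈ Y)
include harc

theorem contract_right_step_snd {p q : CVertex Y} (h : (G.contract Y).step p q) :
    q = Sum.inr () := by
  obtain ⟨a, -, -, rfl⟩ := (contract_step_iff G).mp h
  exact cMap_of_mem (harc a).2

include hdisj

theorem contract_left_step_snd {p q : CVertex X} (h : (G.contract X).step p q) :
    q ≠ Sum.inr () := by
  obtain ⟨a, -, -, rfl⟩ := (contract_step_iff G).mp h
  exact fun hq => Set.disjoint_left.mp hdisj (cMap_eq_inr_iff.mp hq) (harc a).2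

theorem cMap_pair_notMem_vrspRemoved_of_mem {x : V} (hx : x ∈ X) :
    (cMap Y x, cMap X x) ∉ vrspRemoved (G.contract Y) (G.contract X) := by
  refine notMem_vrspRemoved_of_not_posLevelBox fun hpos => ?_
  obtain ⟨w, hw⟩ := posLevelBox_iff.mp hpos
  rcases box_step_iff.mp hw with ⟨h, -⟩ | ⟨-, h⟩
  · exact Set.disjoint_left.mp hdisj hx (cMap_eq_inr_iff.mp (contract_right_step_snd harc h))
  · exact contract_left_step_snd hdisj harc h (cMap_of_mem hx)

variable (hcomp : ∀ x ∈ X, ∀ y ∈ Y, ∃ a, G.mu a = (x, y))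
include hcomp

omit hdisj in
theorem step_iff_mem_mem {u v : V} : G.step u v ↔ u ∈ X ∧ v ∈ Y :=
  ⟨fun ⟨a, ha⟩ => by simpa [ha] using harc a, fun ⟨hu, hv⟩ => hcomp u hu v hv⟩

theorem contract_right_step_cMap_iff {u v : V} :
    (G.contract Y).step (cMap Y u) (cMap Y v) ↔ G.step u v := by
  rw [contract_step_iff, step_iff_mem_mem harc hcomp]
  constructor
  · rintro ⟨a, -, hu, hv⟩
    have hvY : v ∈ Y := cMap_eq_inr_iff.mp (hv.symm.trans (cMap_of_mem (harc a).2))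
    have hau : (G.mu a).1 = u :=
      (eq_of_cMap_eq (Set.disjoint_left.mp hdisj (harc a).1) hu.symm).symm
    exact ⟨hau ▸ (harc a).1, hvY⟩
  · rintro ⟨hu, hv⟩
    obtain ⟨a, ha⟩ := hcomp u hu v hv
    exact ⟨a, fun h => Set.disjoint_left.mp hdisj (harc a).1 h.1, by rw [ha], by rw [ha]⟩

theorem contract_left_step_cMap_iff {u v : V} :
    (G.contract X).step (cMap X u) (cMap X v) ↔ G.step u v := by
  rw [contract_step_iff, step_iff_mem_mem harc hcomp]
  constructor
  · rintro ⟨a, -, hu, hv⟩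
    have huX : u ∈ X := cMap_eq_inr_iff.mp (hu.symm.trans (cMap_of_mem (harc a).1))
    have hav : (G.mu a).2 = v :=
      (eq_of_cMap_eq (Set.disjoint_right.mp hdisj (harc a).2) hv.symm).symm
    exact ⟨huX, hav ▸ (harc a).2⟩
  · rintro ⟨hu, hv⟩
    obtain ⟨a, ha⟩ := hcomp u hu v hv
    exact ⟨a, fun h => Set.disjoint_right.mp hdisj (harc a).2 h.2, by rw [ha], by rw [ha]⟩

variable {ℓ : L} (hlab : ∀ a, G.lab a = ℓ) [Nonempty A]
include hlab

theorem inter_contract_step_iff {p q : CVertex Y × CVertex X} :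
    ((G.contract Y).inter (G.contract X)).step p q ↔
      (G.contract Y).step p.1 q.1 ∧ (G.contract X).step p.2 q.2 := by
  obtain ⟨a⟩ := ‹Nonempty A›
  have : Nonempty (CArc G Y) :=
    let ⟨e, _⟩ := (contract_right_step_cMap_iff hdisj harc hcomp).mpr ⟨a, rfl⟩; ⟨e⟩
  have : Nonempty (CArc G X) :=
    let ⟨e, _⟩ := (contract_left_step_cMap_iff hdisj harc hcomp).mpr ⟨a, rfl⟩; ⟨e⟩
  exact inter_step_iff_of_lab_eq (contract_lab_eq hlab) (contract_lab_eq hlab)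

theorem inter_contract_step_cMap_iff {u v : V} :
    ((G.contract Y).inter (G.contract X)).step (cMap Y u, cMap X u) (cMap Y v, cMap X v) ↔
      G.step u v := by
  rw [inter_contract_step_iff hdisj harc hcomp hlab,
    contract_right_step_cMap_iff hdisj harc hcomp,
    contract_left_step_cMap_iff hdisj harc hcomp, and_self]

theorem inl_inl_mem_vrspRemoved (hcover : ∀ v, v ∈ X ∨ v ∈ Y) (x : {v // v ∉ Y})
    (y : {v // v ∉ X}) : ((Sum.inl x, Sum.inl y) : CVertex Y × CVertex X) ∈
      vrspRemoved (G.contract Y) (G.contract X) := by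
  obtain ⟨a⟩ := ‹Nonempty A›
  refine mem_vrspRemoved_of_inDegZero (posLevelBox_iff.mpr
    ⟨(Sum.inl x, cMap X (G.mu a).1), box_step_iff.mpr (Or.inr ⟨rfl, ?_⟩)⟩)
    (inDegZero_iff.mpr fun w hw => ?_)
  · rw [← cMap_of_notMem y.2, contract_left_step_cMap_iff hdisj harc hcomp]
    exact hcomp _ (harc a).1 _ ((hcover y).resolve_left y.2)
  · exact Sum.inl_ne_inr
      (contract_right_step_snd harc ((inter_contract_step_iff hdisj harc hcomp hlab).mp hw).1)

theorem inr_inr_mem_vrspRemoved : ((Sum.inr (), Sum.inr ()) : CVertex Y × CVertex X) ∈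
    vrspRemoved (G.contract Y) (G.contract X) := by
  obtain ⟨a⟩ := ‹Nonempty A›
  refine mem_vrspRemoved_of_inDegZero (posLevelBox_iff.mpr
    ⟨(cMap Y (G.mu a).1, Sum.inr ()), box_step_iff.mpr (Or.inl ⟨?_, rfl⟩)⟩)
    (inDegZero_iff.mpr fun w hw => ?_)
  · rw [← cMap_of_mem (harc a).2, contract_right_step_cMap_iff hdisj harc hcomp]
    exact ⟨a, rfl⟩
  · exact contract_left_step_snd hdisj harc
      ((inter_contract_step_iff hdisj harc hcomp hlab).mp hw).2 rfl

variable (hcover : ∀ v, v ∈ X ∨ v ∈ Y)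
include hcover

theorem cMap_pair_notMem_vrspRemoved (v : V) :
    (cMap Y v, cMap X v) ∉ vrspRemoved (G.contract Y) (G.contract X) := by
  rcases hcover v with hv | hv
  · exact cMap_pair_notMem_vrspRemoved_of_mem hdisj harc hv
  obtain ⟨a⟩ := ‹Nonempty A›
  exact notMem_vrspRemoved_of_step
    ((inter_contract_step_cMap_iff hdisj harc hcomp hlab).mpr (hcomp _ (harc a).1 v hv))
    (cMap_pair_notMem_vrspRemoved_of_mem hdisj harc (harc a).1)

theorem exists_cMap_pair_eq (p : VrspV (G.contract Y) (G.contract X)) :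
    ∃ v, (cMap Y v, cMap X v) = p.1 := by
  obtain ⟨⟨x | ⟨⟩, y | ⟨⟩⟩, hp⟩ := p
  · exact absurd (inl_inl_mem_vrspRemoved hdisj harc hcomp hlab hcover x y) hp
  · exact ⟨x, by rw [cMap_of_notMem x.2, cMap_of_mem ((hcover x).resolve_right x.2)]⟩
  · exact ⟨y, by rw [cMap_of_mem ((hcover y).resolve_left y.2), cMap_of_notMem y.2]⟩
  · exact absurd (inr_inr_mem_vrspRemoved hdisj harc hcomp hlab) hp

end CompleteBipartite

end LDMG

theorem completeBipartite_iso_vrsp_general {V A L : Type}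
    (G : LDMG V A L) (X Y : Set V) (ℓ : L)
    (hcover : ∀ v : V, v ∈ X ∨ v ∈ Y) (hdisj : Disjoint X Y)
    (harc : ∀ a : A, (G.mu a).1 ∈ X ∧ (G.mu a).2 ∈ Y)
    (hcomp : ∀ x ∈ X, ∀ y ∈ Y, ∃ a : A, G.mu a = (x, y))
    (hlab : ∀ a : A, G.lab a = ℓ)
    (hAne : Nonempty A) :
    LDMG.Iso G ((G.contract Y).vrsp (G.contract X)) := by
  let φ : V → LDMG.VrspV (G.contract Y) (G.contract X) := fun v =>
    ⟨(LDMG.cMap Y v, LDMG.cMap X v),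
      LDMG.cMap_pair_notMem_vrspRemoved hdisj harc hcomp hlab hcover v⟩
  have hφ : Function.Bijective φ :=
    ⟨fun _ _ h => LDMG.cMap_prod_injective hdisj.symm (congrArg Subtype.val h),
      fun p => (LDMG.exists_cMap_pair_eq hdisj harc hcomp hlab hcover p).imp
        fun _ hv => Subtype.ext hv⟩
  refine LDMG.iso_of_step_iff hlab
    (fun b => LDMG.inter_lab_eq (LDMG.contract_lab_eq hlab) (LDMG.contract_lab_eq hlab) b.1)
    (Equiv.ofBijective φ hφ) fun u v =>
      (LDMG.vrsp_step_iff.trans (LDMG.inter_contract_step_cMap_iff hdisj harc hcomp hlab)).symm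

/-- A complete bipartite labelled acyclic directed graph `B(X,Y)` (all arcs from `X` to
`Y`, all with the same label, at least one arc) is isomorphic to the vertex-removing
synchronised product `(B(X,Y)/Y) ⊟ (B(X,Y)/X)`. -/
theorem completeBipartite_iso_vrsp {V A L : Type} [Fintype V] [Fintype A]
    (G : LDMG V A L) (X Y : Set V) (ℓ : L)
    (hacyc : G.Acyclic)
    (hcover : ∀ v : V, v ∈ X ∨ v ∈ Y) (hdisj : Disjoint X Y)
    (hXne : X.Nonempty) (hYne : Y.Nonempty)
    (harc : ∀ a : A, (G.mu a).1 ∈ X ∧ (G.mu a).2 ∈ Y)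
    (hcomp : ∀ x ∈ X, ∀ y ∈ Y, ∃ a : A, G.mu a = (x, y))
    (hsimple : Function.Injective G.mu)
    (hlab : ∀ a : A, G.lab a = ℓ)
    (hAne : Nonempty A) :
    LDMG.Iso G ((G.contract Y).vrsp (G.contract X)) :=
  completeBipartite_iso_vrsp_general G X Y ℓ hcover hdisj harc hcomp hlab hAne
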